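/- Let f : 𝔻 → 𝔻 be holomorphic on the unit disk and let B be a holomorphic self-map of 𝔻 whose zeros are exactly the zeros of f' (with multiplicity). Then the function λ(z) = |f'(z)| / ((1 - |f(z)|²) |B(z)|) extends to a positive smooth function on 𝔻, and u = log λ satisfies the Gaussian curvature equation Δu = 4 |B(z)|² e^{2u} on 𝔻; equivalently, the conformal metric λ(z)|dz| has Gaussian curvature -4|B(z)|². -/

import Mathlib

open Complex Filter Topology

/-- Euclidean Laplacian `Δu = ∂²u/∂x² + ∂²u/∂y²` of a real-valued function on `ℂ`. -/
noncomputable def lap (u : ℂ → ℝ) (z : ℂ) : ℝ :=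
  fderiv ℝ (fun w => fderiv ℝ u w 1) z 1 + fderiv ℝ (fun w => fderiv ℝ u w Complex.I) z Complex.I

noncomputable def rlin (c : ℂ) : ℂ →L[ℝ] ℂ := (c • ContinuousLinearMap.id ℂ ℂ).restrictScalars ℝ
@[simp] lemma rlin_apply (c v : ℂ) : rlin c v = c * v := rfl

lemma hasFDerivAt_rlin {φ : ℂ → ℂ} {w : ℂ} (hφ : DifferentiableAt ℂ φ w) :
    HasFDerivAt φ (rlin (deriv φ w)) w := by
  have h := (hφ.hasDerivAt.hasFDerivAt).restrictScalars ℝ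
  refine h.congr_fderiv ?_
  ext v
  simp [mul_comm]

noncomputable def relin (c : ℂ) : ℂ →L[ℝ] ℝ := Complex.reCLM.comp (rlin c)
@[simp] lemma relin_apply (c v : ℂ) : relin c v = (c * v).re := rfl

lemma hasFDerivAt_M (φ : ℂ → ℂ) (a b : ℝ) {w : ℂ} (hφ : DifferentiableAt ℂ φ w) :
    HasFDerivAt (fun x => a + b * Complex.normSq (φ x))
      ((2*b) • relin ((starRingEnd ℂ) (φ w) * deriv φ w)) w := by
  have hre : (fun x => a + b * Complex.normSq (φ x))
      = fun x => a + b * (φ x * (starRingEnd ℂ) (φ x)).re := by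
    funext x; rw [Complex.mul_conj, Complex.ofReal_re]
  rw [hre]
  have hp := hasFDerivAt_rlin hφ
  have hconj : HasFDerivAt (fun x => (starRingEnd ℂ) (φ x))
      ((Complex.conjCLE.toContinuousLinearMap).comp (rlin (deriv φ w))) w :=
    (Complex.conjCLE.toContinuousLinearMap.hasFDerivAt).comp w hp
  have hmul := hp.mul hconj
  have hfull := ((Complex.reCLM.hasFDerivAt).comp w hmul).const_mul b |>.const_add a
  refine HasFDerivAt.congr_fderiv hfull ?_
  ext v
  simp [Complex.mul_re, Complex.mul_im]
  ring

lemma hasFDerivAt_logM (φ : ℂ → ℂ) (a b : ℝ) {w : ℂ} (hφ : DifferentiableAt ℂ φ w)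
    (hM : a + b * Complex.normSq (φ w) ≠ 0) :
    HasFDerivAt (fun x => Real.log (a + b * Complex.normSq (φ x)))
      ((a + b * Complex.normSq (φ w))⁻¹ • ((2*b) • relin ((starRingEnd ℂ) (φ w) * deriv φ w))) w :=
  by have := (Real.hasDerivAt_log hM).comp_hasFDerivAt w (hasFDerivAt_M φ a b hφ); exact this

lemma fderiv_logM_apply (φ : ℂ → ℂ) (a b : ℝ) {w : ℂ} (hφ : DifferentiableAt ℂ φ w)
    (hM : a + b * Complex.normSq (φ w) ≠ 0) (v : ℂ) :
    fderiv ℝ (fun x => Real.log (a + b * Complex.normSq (φ x))) w v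
      = 2*b*(((starRingEnd ℂ) (φ w) * deriv φ w * v).re)/(a + b * Complex.normSq (φ w)) := by
  rw [(hasFDerivAt_logM φ a b hφ hM).fderiv]
  simp
  ring

/-- the function giving the `v₀`-slice of the first derivative of `log (a + b |φ|²)`. -/
noncomputable def Gfun (φ : ℂ → ℂ) (a b : ℝ) (v₀ : ℂ) : ℂ → ℝ :=
  fun w => 2*b*(((starRingEnd ℂ) (φ w) * deriv φ w * v₀).re)/(a + b * Complex.normSq (φ w))

lemma hasFDerivAt_G (φ : ℂ → ℂ) (a b : ℝ) (v₀ : ℂ) {z : ℂ}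
    (hφ : DifferentiableAt ℂ φ z) (hφ' : DifferentiableAt ℂ (deriv φ) z)
    (hM : a + b * Complex.normSq (φ z) ≠ 0) :
    ∃ L : ℂ →L[ℝ] ℝ, HasFDerivAt (Gfun φ a b v₀) L z ∧ ∀ v : ℂ,
      L v = (2*b*(((starRingEnd ℂ) (deriv φ z) * deriv φ z * v₀ * (starRingEnd ℂ) v
              + (starRingEnd ℂ) (φ z) * deriv (deriv φ) z * v₀ * v).re)
              * (a + b * Complex.normSq (φ z))
            - 2*b*(((starRingEnd ℂ) (φ z) * deriv φ z * v₀).re)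
              * (2*b*(((starRingEnd ℂ) (φ z) * deriv φ z * v).re)))
            / (a + b * Complex.normSq (φ z))^2 := by
  have hp := hasFDerivAt_rlin hφ
  have hq := hasFDerivAt_rlin hφ'
  have hconj : HasFDerivAt (fun x => (starRingEnd ℂ) (φ x))
      ((Complex.conjCLE.toContinuousLinearMap).comp (rlin (deriv φ z))) z :=
    (Complex.conjCLE.toContinuousLinearMap.hasFDerivAt).comp z hp
  have hC := hconj.mul hq
  have hCv := hC.mul_const v₀
  have hNum := ((Complex.reCLM.hasFDerivAt).comp z hCv).const_mul (2*b)
  have hDen := hasFDerivAt_M φ a b hφ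
  have hInv := (hasDerivAt_inv hM).comp_hasFDerivAt z hDen
  have hG := hNum.mul hInv
  have heq : Gfun φ a b v₀ = fun w =>
      (2*b*(((starRingEnd ℂ) (φ w) * deriv φ w * v₀).re)) * (a + b * Complex.normSq (φ w))⁻¹ := by
    funext w; rw [Gfun, div_eq_mul_inv]
  have hG' := hG.congr_of_eventuallyEq (f₁ := Gfun φ a b v₀)
    (Filter.Eventually.of_forall fun w => by simp [Gfun, div_eq_mul_inv])
  refine ⟨_, hG', fun v => ?_⟩
  have hM2 : (a + b * Complex.normSq (φ z))^2 ≠ 0 := pow_ne_zero _ hM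
  simp only [ContinuousLinearMap.add_apply, ContinuousLinearMap.coe_smul', Pi.smul_apply,
    ContinuousLinearMap.coe_comp', Function.comp_apply, Complex.reCLM_apply, rlin_apply,
    relin_apply, Complex.conjCLE_apply, smul_eq_mul, Complex.smul_re, map_mul,
    ContinuousLinearEquiv.coe_coe]
  field_simp
  simp [Complex.mul_re, Complex.mul_im, Complex.normSq_apply]
  left; ring

lemma lap_congr' {u v : ℂ → ℝ} {z : ℂ} (h : u =ᶠ[𝓝 z] v) :
    (fderiv ℝ (fun w => fderiv ℝ u w 1) z 1 + fderiv ℝ (fun w => fderiv ℝ u w Complex.I) z Complex.I)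
    = fderiv ℝ (fun w => fderiv ℝ v w 1) z 1
      + fderiv ℝ (fun w => fderiv ℝ v w Complex.I) z Complex.I := by
  have h' := h.fderiv (𝕜 := ℝ)
  have e1 : (fun w => fderiv ℝ u w 1) =ᶠ[𝓝 z] (fun w => fderiv ℝ v w 1) :=
    h'.mono fun w hw => by simp only [hw]
  have eI : (fun w => fderiv ℝ u w Complex.I) =ᶠ[𝓝 z] (fun w => fderiv ℝ v w Complex.I) :=
    h'.mono fun w hw => by simp only [hw]
  rw [e1.fderiv_eq, eI.fderiv_eq]

lemma part_sum (F p q : ℂ) (a b : ℝ) :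
    (2*b*(((starRingEnd ℂ) p * p * 1 * (starRingEnd ℂ) 1 + (starRingEnd ℂ) F * q * 1 * 1).re)
        * (a + b * Complex.normSq F)
      - 2*b*(((starRingEnd ℂ) F * p * 1).re) * (2*b*(((starRingEnd ℂ) F * p * 1).re)))
      / (a + b * Complex.normSq F)^2
  + (2*b*(((starRingEnd ℂ) p * p * Complex.I * (starRingEnd ℂ) Complex.I
        + (starRingEnd ℂ) F * q * Complex.I * Complex.I).re) * (a + b * Complex.normSq F)
      - 2*b*(((starRingEnd ℂ) F * p * Complex.I).re) * (2*b*(((starRingEnd ℂ) F * p * Complex.I).re)))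
      / (a + b * Complex.normSq F)^2
  = 4*a*b*Complex.normSq p / (a + b * Complex.normSq F)^2 := by
  rw [← add_div]
  congr 1
  simp [Complex.mul_re, Complex.mul_im, Complex.normSq_apply]
  ring

/-- If `f : 𝔻 → 𝔻` is holomorphic and `B` is a holomorphic self-map of `𝔻` whose zeros are
exactly the zeros of `f'` with multiplicity (encoded: `f' = B ⋅ g` with `g` holomorphic and
nonvanishing on `𝔻`), then `λ(z) = |f'(z)|/((1-|f(z)|²)|B(z)|)` extends to a positive smooth
function `Λ` on `𝔻` whose logarithm `u = log Λ` solves `Δu = 4|B|² e^{2u}` on `𝔻`. -/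
theorem curvature_of_quotient_metric
    (f B g : ℂ → ℂ)
    (hf : DifferentiableOn ℂ f (Metric.ball (0:ℂ) 1))
    (hfmaps : Set.MapsTo f (Metric.ball (0:ℂ) 1) (Metric.ball (0:ℂ) 1))
    (hB : DifferentiableOn ℂ B (Metric.ball (0:ℂ) 1))
    (hBmaps : Set.MapsTo B (Metric.ball (0:ℂ) 1) (Metric.ball (0:ℂ) 1))
    (hg : DifferentiableOn ℂ g (Metric.ball (0:ℂ) 1))
    (hgne : ∀ z ∈ Metric.ball (0:ℂ) 1, g z ≠ 0)
    (hfac : ∀ z ∈ Metric.ball (0:ℂ) 1, deriv f z = B z * g z) :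
    ∃ Λ : ℂ → ℝ,
      (∀ z ∈ Metric.ball (0:ℂ) 1, 0 < Λ z) ∧
      ContDiffOn ℝ (⊤ : ℕ∞) Λ (Metric.ball (0:ℂ) 1) ∧
      (∀ z ∈ Metric.ball (0:ℂ) 1, B z ≠ 0 →
        Λ z = ‖deriv f z‖ / ((1 - (‖f z‖)^2) * ‖B z‖)) ∧
      (∀ z ∈ Metric.ball (0:ℂ) 1,
        lap (fun w => Real.log (Λ w)) z
          = 4 * (‖B z‖)^2 * Real.exp (2 * Real.log (Λ z))) := by
  set S := Metric.ball (0:ℂ) 1 with hSdef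
  have hS : IsOpen S := Metric.isOpen_ball
  -- basic pointwise facts
  have hNf : ∀ z ∈ S, Complex.normSq (f z) < 1 := by
    intro z hz
    have := hfmaps hz
    rw [Metric.mem_ball, dist_zero_right] at this
    rw [Complex.normSq_eq_norm_sq]
    nlinarith [norm_nonneg (f z)]
  have hD : ∀ z ∈ S, (0:ℝ) < 1 - Complex.normSq (f z) := fun z hz => by
    have := hNf z hz; linarith
  have hNg : ∀ z ∈ S, (0:ℝ) < Complex.normSq (g z) := fun z hz =>
    Complex.normSq_pos.mpr (hgne z hz)
  refine ⟨fun w => Real.sqrt (Complex.normSq (g w)) / (1 - Complex.normSq (f w)),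
    ?_, ?_, ?_, ?_⟩
  · intro z hz
    exact div_pos (Real.sqrt_pos.mpr (hNg z hz)) (hD z hz)
  · -- smoothness
    intro z hz
    have hfz : ContDiffAt ℝ (⊤ : ℕ∞) f z :=
      ((hf.analyticOnNhd hS z hz).contDiffAt.restrict_scalars ℝ).of_le le_top
    have hgz : ContDiffAt ℝ (⊤ : ℕ∞) g z :=
      ((hg.analyticOnNhd hS z hz).contDiffAt.restrict_scalars ℝ).of_le le_top
    have hns : ContDiff ℝ (⊤ : ℕ∞) (fun w : ℂ => Complex.normSq w) := by
      simp only [Complex.normSq_apply]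
      exact (Complex.reCLM.contDiff.mul Complex.reCLM.contDiff).add
        (Complex.imCLM.contDiff.mul Complex.imCLM.contDiff)
    refine ContDiffAt.contDiffWithinAt (ContDiffAt.div ?_ ?_ (hD z hz).ne')
    · exact (Real.contDiffAt_sqrt (hNg z hz).ne').comp z ((hns.contDiffAt).comp z hgz)
    · exact contDiffAt_const.sub ((hns.contDiffAt).comp z hfz)
  · -- formula
    intro z hz hBz
    beta_reduce
    rw [hfac z hz, norm_mul]
    rw [show ‖f z‖ ^ 2 = Complex.normSq (f z) from Complex.sq_norm (f z)]
    rw [show Real.sqrt (Complex.normSq (g z)) = ‖g z‖ from (Complex.norm_def _).symm]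
    have hBne : ‖B z‖ ≠ 0 := norm_ne_zero_iff.mpr hBz
    have hDne := (hD z hz).ne'
    field_simp
  · -- Laplacian
    intro z hz
    have hmem : ∀ᶠ w in 𝓝 z, w ∈ S := hS.eventually_mem hz
    have hfz : DifferentiableAt ℂ f z := hf.differentiableAt (hS.mem_nhds hz)
    have hgz : DifferentiableAt ℂ g z := hg.differentiableAt (hS.mem_nhds hz)
    have hfz' : DifferentiableAt ℂ (deriv f) z :=
      (((hf.analyticOnNhd hS).deriv) z hz).differentiableAt
    have hgz' : DifferentiableAt ℂ (deriv g) z :=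
      (((hg.analyticOnNhd hS).deriv) z hz).differentiableAt
    have hMg : ∀ w ∈ S, (0:ℝ) + 1 * Complex.normSq (g w) ≠ 0 := fun w hw => by
      have := hNg w hw; intro h; rw [zero_add, one_mul] at h; linarith
    have hMf : ∀ w ∈ S, (1:ℝ) + (-1) * Complex.normSq (f w) ≠ 0 := fun w hw => by
      have := hD w hw; intro h; nlinarith
    -- replace log Λ by the sum of two logs
    have hcongr : (fun w => Real.log (Real.sqrt (Complex.normSq (g w)) / (1 - Complex.normSq (f w))))
        =ᶠ[𝓝 z] (fun w => (1/2) * Real.log ((0:ℝ) + 1 * Complex.normSq (g w))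
          + (-1) * Real.log ((1:ℝ) + (-1) * Complex.normSq (f w))) := by
      filter_upwards [hmem] with w hw
      have h1 := hNg w hw
      have h2 := hD w hw
      rw [Real.log_div (Real.sqrt_pos.mpr h1).ne' h2.ne', Real.log_sqrt (Complex.normSq_nonneg _)]
      rw [show (0:ℝ) + 1 * Complex.normSq (g w) = Complex.normSq (g w) by ring]
      rw [show (1:ℝ) + (-1) * Complex.normSq (f w) = 1 - Complex.normSq (f w) by ring]
      ring
    rw [lap]
    beta_reduce
    rw [lap_congr' hcongr]
    -- first derivative slices
    have slice : ∀ v₀ : ℂ,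
        (fun w => fderiv ℝ (fun x => (1/2) * Real.log ((0:ℝ) + 1 * Complex.normSq (g x))
          + (-1) * Real.log ((1:ℝ) + (-1) * Complex.normSq (f x))) w v₀)
        =ᶠ[𝓝 z] (fun w => (1/2) * Gfun g 0 1 v₀ w + (-1) * Gfun f 1 (-1) v₀ w) := by
      intro v₀
      filter_upwards [hmem] with w hw
      have hgw : DifferentiableAt ℂ g w := hg.differentiableAt (hS.mem_nhds hw)
      have hfw : DifferentiableAt ℂ f w := hf.differentiableAt (hS.mem_nhds hw)
      have d1 := (hasFDerivAt_logM g 0 1 hgw (hMg w hw)).differentiableAt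
      have d2 := (hasFDerivAt_logM f 1 (-1) hfw (hMf w hw)).differentiableAt
      rw [fderiv_fun_add (d1.const_mul _) (d2.const_mul _), fderiv_const_mul d1,
        fderiv_const_mul d2]
      simp only [ContinuousLinearMap.add_apply, ContinuousLinearMap.coe_smul', Pi.smul_apply,
        smul_eq_mul]
      rw [fderiv_logM_apply g 0 1 hgw (hMg w hw) v₀, fderiv_logM_apply f 1 (-1) hfw (hMf w hw) v₀]
      rfl
    obtain ⟨Lg1, hLg1, hLg1v⟩ := hasFDerivAt_G g 0 1 1 hgz hgz' (hMg z hz)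
    obtain ⟨LgI, hLgI, hLgIv⟩ := hasFDerivAt_G g 0 1 Complex.I hgz hgz' (hMg z hz)
    obtain ⟨Lf1, hLf1, hLf1v⟩ := hasFDerivAt_G f 1 (-1) 1 hfz hfz' (hMf z hz)
    obtain ⟨LfI, hLfI, hLfIv⟩ := hasFDerivAt_G f 1 (-1) Complex.I hfz hfz' (hMf z hz)
    rw [(slice 1).fderiv_eq, (slice Complex.I).fderiv_eq]
    rw [((hLg1.const_mul (1/2:ℝ)).fun_add (hLf1.const_mul (-1:ℝ))).fderiv]
    rw [((hLgI.const_mul (1/2:ℝ)).fun_add (hLfI.const_mul (-1:ℝ))).fderiv]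
    simp only [ContinuousLinearMap.add_apply, ContinuousLinearMap.coe_smul', Pi.smul_apply,
      smul_eq_mul]
    rw [hLg1v 1, hLf1v 1, hLgIv Complex.I, hLfIv Complex.I]
    have key : ∀ (F p q : ℂ) (a b : ℝ),
        (2*b*(((starRingEnd ℂ) p * p * 1 * (starRingEnd ℂ) 1 + (starRingEnd ℂ) F * q * 1 * 1).re)
            * (a + b * Complex.normSq F)
          - 2*b*(((starRingEnd ℂ) F * p * 1).re) * (2*b*(((starRingEnd ℂ) F * p * 1).re)))
          / (a + b * Complex.normSq F)^2
      + (2*b*(((starRingEnd ℂ) p * p * Complex.I * (starRingEnd ℂ) Complex.I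
            + (starRingEnd ℂ) F * q * Complex.I * Complex.I).re) * (a + b * Complex.normSq F)
          - 2*b*(((starRingEnd ℂ) F * p * Complex.I).re)
            * (2*b*(((starRingEnd ℂ) F * p * Complex.I).re)))
          / (a + b * Complex.normSq F)^2
      = 4*a*b*Complex.normSq p / (a + b * Complex.normSq F)^2 := part_sum
    have hgpart := key (g z) (deriv g z) (deriv (deriv g) z) 0 1
    have hfpart := key (f z) (deriv f z) (deriv (deriv f) z) 1 (-1)
    -- assemble
    have hassemble :
        (1/2) * ((2*1*(((starRingEnd ℂ) (deriv g z) * deriv g z * 1 * (starRingEnd ℂ) 1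
              + (starRingEnd ℂ) (g z) * deriv (deriv g) z * 1 * 1).re)
              * (0 + 1 * Complex.normSq (g z))
            - 2*1*(((starRingEnd ℂ) (g z) * deriv g z * 1).re)
              * (2*1*(((starRingEnd ℂ) (g z) * deriv g z * 1).re)))
            / (0 + 1 * Complex.normSq (g z))^2)
        + (-1) * ((2*(-1)*(((starRingEnd ℂ) (deriv f z) * deriv f z * 1 * (starRingEnd ℂ) 1
              + (starRingEnd ℂ) (f z) * deriv (deriv f) z * 1 * 1).re)
              * (1 + (-1) * Complex.normSq (f z))
            - 2*(-1)*(((starRingEnd ℂ) (f z) * deriv f z * 1).re)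
              * (2*(-1)*(((starRingEnd ℂ) (f z) * deriv f z * 1).re)))
            / (1 + (-1) * Complex.normSq (f z))^2)
        + ((1/2) * ((2*1*(((starRingEnd ℂ) (deriv g z) * deriv g z * Complex.I * (starRingEnd ℂ) Complex.I
              + (starRingEnd ℂ) (g z) * deriv (deriv g) z * Complex.I * Complex.I).re)
              * (0 + 1 * Complex.normSq (g z))
            - 2*1*(((starRingEnd ℂ) (g z) * deriv g z * Complex.I).re)
              * (2*1*(((starRingEnd ℂ) (g z) * deriv g z * Complex.I).re)))
            / (0 + 1 * Complex.normSq (g z))^2)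
        + (-1) * ((2*(-1)*(((starRingEnd ℂ) (deriv f z) * deriv f z * Complex.I * (starRingEnd ℂ) Complex.I
              + (starRingEnd ℂ) (f z) * deriv (deriv f) z * Complex.I * Complex.I).re)
              * (1 + (-1) * Complex.normSq (f z))
            - 2*(-1)*(((starRingEnd ℂ) (f z) * deriv f z * Complex.I).re)
              * (2*(-1)*(((starRingEnd ℂ) (f z) * deriv f z * Complex.I).re)))
            / (1 + (-1) * Complex.normSq (f z))^2))
        = (1/2) * (4*0*1*Complex.normSq (deriv g z) / (0 + 1 * Complex.normSq (g z))^2)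
          + (-1) * (4*1*(-1)*Complex.normSq (deriv f z) / (1 + (-1) * Complex.normSq (f z))^2) := by
      rw [← hgpart, ← hfpart]; ring
    rw [hassemble]
    -- final algebra
    have hDz := hD z hz
    have hgz0 := hNg z hz
    have hexp : Real.exp (2 * Real.log (Real.sqrt (Complex.normSq (g z)) / (1 - Complex.normSq (f z))))
        = (Real.sqrt (Complex.normSq (g z)) / (1 - Complex.normSq (f z)))
          * (Real.sqrt (Complex.normSq (g z)) / (1 - Complex.normSq (f z))) := by
      rw [show (2:ℝ) * Real.log (Real.sqrt (Complex.normSq (g z)) / (1 - Complex.normSq (f z)))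
          = Real.log (Real.sqrt (Complex.normSq (g z)) / (1 - Complex.normSq (f z)))
            + Real.log (Real.sqrt (Complex.normSq (g z)) / (1 - Complex.normSq (f z))) by ring]
      rw [Real.exp_add, Real.exp_log (div_pos (Real.sqrt_pos.mpr hgz0) hDz)]
    rw [hexp, hfac z hz, show ‖B z‖ ^ 2 = Complex.normSq (B z) from
      Complex.sq_norm (B z), map_mul Complex.normSq]
    have hLsq : (Real.sqrt (Complex.normSq (g z)) / (1 - Complex.normSq (f z)))
          * (Real.sqrt (Complex.normSq (g z)) / (1 - Complex.normSq (f z)))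
        = Complex.normSq (g z) / ((1 - Complex.normSq (f z)) * (1 - Complex.normSq (f z))) := by
      rw [div_mul_div_comm, Real.mul_self_sqrt (Complex.normSq_nonneg _)]
    rw [hLsq]
    have hDne := (hD z hz).ne'
    have hNgne := (hNg z hz).ne'
    have hMfz := hMf z hz
    rw [show (1:ℝ) + -1 * Complex.normSq (f z) = 1 - Complex.normSq (f z) from by ring]
    field_simp
    ring
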